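/- Let $\mu, \nu$ be probability measures on $\mathbb{R}^d$ with finite second moments, means $\mathbf{m}_\mu, \mathbf{m}_\nu$, and let $\bar\mu, \bar\nu$ denote their centered versions (pushforwards by $x \mapsto x - \mathbf{m}_\mu$ and $x \mapsto x - \mathbf{m}_\nu$ respectively). Then $SW_2^2(\mu, \nu) = SW_2^2(\bar\mu, \bar\nu) + \frac{1}{d} \|\mathbf{m}_\mu - \mathbf{m}_\nu\|^2$. -/

import Mathlib

open MeasureTheory Metric ProbabilityTheory
open scoped RealInnerProductSpace NNReal

/-- `p`-th power of the Wasserstein distance of order `p` between two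
probability measures on `ℝ`. -/
noncomputable def WpPow (p : ℝ) (μ ν : Measure ℝ) : ℝ :=
  sInf {c : ℝ | ∃ γ : Measure (ℝ × ℝ), IsProbabilityMeasure γ ∧
    γ.map Prod.fst = μ ∧ γ.map Prod.snd = ν ∧ c = ∫ z, |z.1 - z.2| ^ p ∂γ}

/-- The uniform probability measure on the unit sphere `𝕊^{d-1} ⊆ ℝ^d`. -/
noncomputable def sphereUniform (d : ℕ) :
    Measure (sphere (0 : EuclideanSpace ℝ (Fin d)) 1) :=
  ((volume : Measure (EuclideanSpace ℝ (Fin d))).toSphere Set.univ)⁻¹ •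
    (volume : Measure (EuclideanSpace ℝ (Fin d))).toSphere

/-- The Gaussian measure on `ℝ^d` with mean `m` and covariance `v • I`. -/
noncomputable def gaussianPi (d : ℕ) (m : Fin d → ℝ) (v : ℝ≥0) :
    Measure (EuclideanSpace ℝ (Fin d)) :=
  Measure.map (⇑(EuclideanSpace.equiv (Fin d) ℝ).symm)
    (Measure.pi fun i => gaussianReal (m i) v)

/-- `p`-th power of the Sliced-Wasserstein distance of order `p`. -/
noncomputable def SWPow (p : ℝ) {d : ℕ} (μ ν : Measure (EuclideanSpace ℝ (Fin d))) : ℝ :=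
  ∫ θ : sphere (0 : EuclideanSpace ℝ (Fin d)) 1,
    WpPow p (μ.map fun x => ⟪(θ : EuclideanSpace ℝ (Fin d)), x⟫)
      (ν.map fun x => ⟪(θ : EuclideanSpace ℝ (Fin d)), x⟫) ∂(sphereUniform d)

noncomputable section
namespace SWaux



/-- The cost set of couplings, with natural-power integrand. -/
def S1 (μ ν : Measure ℝ) : Set ℝ :=
  {c : ℝ | ∃ γ : Measure (ℝ × ℝ), IsProbabilityMeasure γ ∧
    γ.map Prod.fst = μ ∧ γ.map Prod.snd = ν ∧ c = ∫ z, (z.1 - z.2) ^ 2 ∂γ}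

lemma integrand_eq : (fun z : ℝ × ℝ => |z.1 - z.2| ^ (2:ℝ)) = fun z : ℝ × ℝ => (z.1 - z.2) ^ 2 := by
  funext z
  rw [show (2:ℝ) = ((2:ℕ):ℝ) by norm_num, Real.rpow_natCast, sq_abs]

lemma WpPow_eq_sInf_S1 (μ ν : Measure ℝ) : WpPow 2 μ ν = sInf (S1 μ ν) := by
  unfold WpPow S1
  simp only [integrand_eq]

lemma S1_nonempty (α β : Measure ℝ) [IsProbabilityMeasure α] [IsProbabilityMeasure β] :
    (S1 α β).Nonempty :=
  ⟨_, α.prod β, inferInstance, by simp [Measure.map_fst_prod], by simp [Measure.map_snd_prod], rfl⟩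

lemma S1_bddBelow (α β : Measure ℝ) : BddBelow (S1 α β) := by
  refine ⟨0, fun v hv => ?_⟩
  obtain ⟨γ, _, _, _, rfl⟩ := hv
  exact integral_nonneg fun z => sq_nonneg _

lemma integrable_comp_marg {X Y : Type*} [MeasurableSpace X] [MeasurableSpace Y]
    {γ : Measure X} {μ : Measure Y} {g : X → Y} (hg : Measurable g) (hm : γ.map g = μ)
    {f : Y → ℝ} (hf : Measurable f) (hμ : Integrable f μ) : Integrable (fun x => f (g x)) γ := by
  have h := hμ
  rw [← hm, integrable_map_measure hf.aestronglyMeasurable hg.aemeasurable] at h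
  exact h

lemma integral_comp_marg {X Y : Type*} [MeasurableSpace X] [MeasurableSpace Y]
    {γ : Measure X} {μ : Measure Y} {g : X → Y} (hg : Measurable g) (hm : γ.map g = μ)
    {f : Y → ℝ} (hf : Measurable f) : ∫ x, f (g x) ∂γ = ∫ y, f y ∂μ := by
  rw [← hm, integral_map hg.aemeasurable hf.aestronglyMeasurable]

lemma abs_le_one_add_sq (x : ℝ) : |x| ≤ 1 + x ^ 2 := by
  nlinarith [sq_nonneg (|x| - 1), sq_abs x, abs_nonneg x]

lemma integrable_id_of_sq {α : Measure ℝ} [IsProbabilityMeasure α]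
    (hα : Integrable (fun x => x ^ 2) α) : Integrable (fun x : ℝ => x) α := by
  refine ((integrable_const (1:ℝ)).add hα).mono' aestronglyMeasurable_id ?_
  filter_upwards with x
  simpa using abs_le_one_add_sq x

lemma integrable_fst {γ : Measure (ℝ × ℝ)} [IsProbabilityMeasure γ]
    (h1 : Integrable (fun z : ℝ × ℝ => z.1 ^ 2) γ) : Integrable (fun z : ℝ × ℝ => z.1) γ := by
  refine ((integrable_const (1:ℝ)).add h1).mono' measurable_fst.aestronglyMeasurable ?_
  filter_upwards with z
  simpa using abs_le_one_add_sq z.1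

lemma integrable_snd {γ : Measure (ℝ × ℝ)} [IsProbabilityMeasure γ]
    (h2 : Integrable (fun z : ℝ × ℝ => z.2 ^ 2) γ) : Integrable (fun z : ℝ × ℝ => z.2) γ := by
  refine ((integrable_const (1:ℝ)).add h2).mono' measurable_snd.aestronglyMeasurable ?_
  filter_upwards with z
  simpa using abs_le_one_add_sq z.2

lemma integrable_cost {γ : Measure (ℝ × ℝ)} [IsProbabilityMeasure γ]
    (h1 : Integrable (fun z : ℝ × ℝ => z.1 ^ 2) γ) (h2 : Integrable (fun z : ℝ × ℝ => z.2 ^ 2) γ) :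
    Integrable (fun z : ℝ × ℝ => (z.1 - z.2) ^ 2) γ := by
  have hb : Integrable (fun z : ℝ × ℝ => 2 * (z.1 ^ 2 + z.2 ^ 2)) γ := (h1.add h2).const_mul 2
  refine hb.mono' ((measurable_fst.sub measurable_snd).pow_const 2).aestronglyMeasurable ?_
  filter_upwards with z
  rw [Real.norm_eq_abs, abs_of_nonneg (sq_nonneg _)]
  nlinarith [sq_nonneg (z.1 + z.2)]

lemma cost_shift (γ : Measure (ℝ × ℝ)) [IsProbabilityMeasure γ]
    (h1 : Integrable (fun z : ℝ × ℝ => z.1 ^ 2) γ) (h2 : Integrable (fun z : ℝ × ℝ => z.2 ^ 2) γ)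
    (c e : ℝ) :
    ∫ z, ((z.1 + c) - (z.2 + e)) ^ 2 ∂γ
      = (∫ z, (z.1 - z.2) ^ 2 ∂γ)
        + (2 * (c - e)) * ((∫ z, z.1 ∂γ) - ∫ z, z.2 ∂γ) + (c - e) ^ 2 := by
  have hd := integrable_cost h1 h2
  have hi1 := integrable_fst h1
  have hi2 := integrable_snd h2
  have h3 : Integrable (fun z : ℝ × ℝ => 2 * (c - e) * (z.1 - z.2)) γ :=
    (hi1.sub hi2).const_mul (2 * (c - e))
  have h4 : Integrable (fun z : ℝ × ℝ => (z.1 - z.2) ^ 2 + 2 * (c - e) * (z.1 - z.2)) γ :=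
    hd.add h3
  have expand : (fun z : ℝ × ℝ => ((z.1 + c) - (z.2 + e)) ^ 2)
      = fun z : ℝ × ℝ => ((z.1 - z.2) ^ 2 + 2 * (c - e) * (z.1 - z.2)) + (c - e) ^ 2 := by
    funext z; ring
  rw [expand, integral_add h4 (integrable_const _), integral_add hd h3, integral_const_mul,
    integral_sub hi1 hi2, integral_const]
  simp


lemma S1_shift_mem {α β : Measure ℝ} [IsProbabilityMeasure α] [IsProbabilityMeasure β]
    (hα : Integrable (fun x => x ^ 2) α) (hβ : Integrable (fun x => x ^ 2) β) (c e : ℝ) {v : ℝ}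
    (hv : v ∈ S1 α β) :
    v + 2 * (c - e) * ((∫ x, x ∂α) - ∫ x, x ∂β) + (c - e) ^ 2
      ∈ S1 (α.map (· + c)) (β.map (· + e)) := by
  obtain ⟨γ, hγp, hγ1, hγ2, rfl⟩ := hv
  have hT : Measurable (fun z : ℝ × ℝ => (z.1 + c, z.2 + e)) := by fun_prop
  have h1 : Integrable (fun z : ℝ × ℝ => z.1 ^ 2) γ :=
    integrable_comp_marg measurable_fst hγ1 (by fun_prop) hα
  have h2 : Integrable (fun z : ℝ × ℝ => z.2 ^ 2) γ :=
    integrable_comp_marg measurable_snd hγ2 (by fun_prop) hβ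
  refine ⟨γ.map (fun z => (z.1 + c, z.2 + e)), Measure.isProbabilityMeasure_map hT.aemeasurable, ?_, ?_, ?_⟩
  · rw [Measure.map_map measurable_fst hT]
    have : (Prod.fst ∘ fun z : ℝ × ℝ => (z.1 + c, z.2 + e)) = (· + c) ∘ Prod.fst := rfl
    rw [this, ← Measure.map_map (by fun_prop) measurable_fst, hγ1]
  · rw [Measure.map_map measurable_snd hT]
    have : (Prod.snd ∘ fun z : ℝ × ℝ => (z.1 + c, z.2 + e)) = (· + e) ∘ Prod.snd := rfl
    rw [this, ← Measure.map_map (by fun_prop) measurable_snd, hγ2]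
  · rw [integral_map (f := fun z : ℝ × ℝ => (z.1 - z.2) ^ 2) hT.aemeasurable
      ((measurable_fst.sub measurable_snd).pow_const 2).aestronglyMeasurable]
    have hm1 : ∫ z : ℝ × ℝ, z.1 ∂γ = ∫ x, x ∂α :=
      integral_comp_marg measurable_fst hγ1 measurable_id
    have hm2 : ∫ z : ℝ × ℝ, z.2 ∂γ = ∫ x, x ∂β :=
      integral_comp_marg measurable_snd hγ2 measurable_id
    rw [show (fun z : ℝ × ℝ => ((z.1 + c, z.2 + e).1 - (z.1 + c, z.2 + e).2) ^ 2)
        = fun z : ℝ × ℝ => ((z.1 + c) - (z.2 + e)) ^ 2 from rfl,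
      cost_shift γ h1 h2 c e, hm1, hm2]

lemma map_centered_add (α : Measure ℝ) (a : ℝ) : (α.map (· - a)).map (· + a) = α := by
  rw [Measure.map_map (by fun_prop) (by fun_prop)]
  have : ((· + a) ∘ (· - a) : ℝ → ℝ) = id := by funext x; simp
  rw [this, Measure.map_id]

lemma integrable_sq_centered {α : Measure ℝ} [IsProbabilityMeasure α]
    (hα : Integrable (fun x => x ^ 2) α) (a : ℝ) :
    Integrable (fun x => x ^ 2) (α.map (· - a)) := by
  rw [integrable_map_measure (by fun_prop : Measurable fun x : ℝ => x ^ 2).aestronglyMeasurable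
    (by fun_prop : Measurable fun x : ℝ => x - a).aemeasurable]
  have : ((fun x : ℝ => x ^ 2) ∘ (· - a)) = fun x : ℝ => (x ^ 2 - 2 * a * x) + a ^ 2 := by
    funext x; simp only [Function.comp_apply]; ring
  rw [this]
  exact (hα.sub ((integrable_id_of_sq hα).const_mul (2 * a))).add (integrable_const _)

lemma mean_centered {α : Measure ℝ} [IsProbabilityMeasure α]
    (hα : Integrable (fun x => x ^ 2) α) :
    ∫ x, x ∂(α.map (· - ∫ t, t ∂α)) = 0 := by
  rw [← integral_comp_marg (γ := α) (g := fun x : ℝ => x - ∫ t, t ∂α) (by fun_prop) rfl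
    (f := fun x : ℝ => x) measurable_id]
  rw [integral_sub (integrable_id_of_sq hα) (integrable_const _), integral_const]
  simp

theorem WpPow_translation (α β : Measure ℝ) [IsProbabilityMeasure α] [IsProbabilityMeasure β]
    (hα : Integrable (fun x => x ^ 2) α) (hβ : Integrable (fun x => x ^ 2) β) :
    WpPow 2 α β = WpPow 2 (α.map (· - ∫ x, x ∂α)) (β.map (· - ∫ x, x ∂β))
      + ((∫ x, x ∂α) - ∫ x, x ∂β) ^ 2 := by
  set a := ∫ x, x ∂α with ha
  set b := ∫ x, x ∂β with hb
  have hαc : IsProbabilityMeasure (α.map (· - a)) :=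
    Measure.isProbabilityMeasure_map (by fun_prop)
  have hβc : IsProbabilityMeasure (β.map (· - b)) :=
    Measure.isProbabilityMeasure_map (by fun_prop)
  rw [WpPow_eq_sInf_S1, WpPow_eq_sInf_S1]
  apply le_antisymm
  · rw [← sub_le_iff_le_add]
    refine le_csInf (S1_nonempty _ _) fun v hv => ?_
    rw [sub_le_iff_le_add]
    have hmem := S1_shift_mem (integrable_sq_centered hα a) (integrable_sq_centered hβ b)
      a b hv
    rw [map_centered_add, map_centered_add, mean_centered hα, mean_centered hβ] at hmem
    simp only [sub_zero, mul_zero, add_zero, sub_self] at hmem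
    exact csInf_le (S1_bddBelow _ _) hmem
  · refine le_csInf (S1_nonempty _ _) fun v hv => ?_
    have hmem := S1_shift_mem hα hβ (-a) (-b) hv
    have he1 : α.map (· + -a) = α.map (· - a) := by congr 1
    have he2 : β.map (· + -b) = β.map (· - b) := by congr 1
    rw [he1, he2] at hmem
    have : v + 2 * (-a - -b) * (a - b) + (-a - -b) ^ 2 = v - (a - b) ^ 2 := by ring
    rw [this] at hmem
    have := csInf_le (S1_bddBelow _ _) hmem
    linarith


section Euclidean

variable {d : ℕ}

local notation "E" => EuclideanSpace ℝ (Fin d)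

lemma measurable_proj (θ : E) : Measurable fun x : E => ⟪θ, x⟫ :=
  (continuous_const.inner continuous_id).measurable

/-- Cost set at the level of `ℝ^d`. -/
def S2 (θ : E) (μ ν : Measure E) : Set ℝ :=
  {c : ℝ | ∃ Γ : Measure (E × E), IsProbabilityMeasure Γ ∧
    Γ.map Prod.fst = μ ∧ Γ.map Prod.snd = ν ∧
    c = ∫ z, (⟪θ, z.1⟫ - ⟪θ, z.2⟫) ^ 2 ∂Γ}

lemma S2_subset_S1 (θ : E) (μ ν : Measure E) :
    S2 θ μ ν ⊆ S1 (μ.map fun x => ⟪θ, x⟫) (ν.map fun x => ⟪θ, x⟫) := by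
  rintro v ⟨Γ, hΓp, hΓ1, hΓ2, rfl⟩
  have hT : Measurable fun z : E × E => ((⟪θ, z.1⟫ : ℝ), (⟪θ, z.2⟫ : ℝ)) :=
    ((measurable_proj θ).comp measurable_fst).prodMk ((measurable_proj θ).comp measurable_snd)
  refine ⟨Γ.map (fun z : E × E => ((⟪θ, z.1⟫ : ℝ), (⟪θ, z.2⟫ : ℝ))),
    Measure.isProbabilityMeasure_map hT.aemeasurable, ?_, ?_, ?_⟩
  · have hc : (Prod.fst ∘ fun z : E × E => ((⟪θ, z.1⟫ : ℝ), (⟪θ, z.2⟫ : ℝ)))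
        = (fun x : E => ⟪θ, x⟫) ∘ Prod.fst := rfl
    rw [Measure.map_map measurable_fst hT, hc,
      ← Measure.map_map (measurable_proj θ) measurable_fst, hΓ1]
  · have hc : (Prod.snd ∘ fun z : E × E => ((⟪θ, z.1⟫ : ℝ), (⟪θ, z.2⟫ : ℝ)))
        = (fun x : E => ⟪θ, x⟫) ∘ Prod.snd := rfl
    rw [Measure.map_map measurable_snd hT, hc,
      ← Measure.map_map (measurable_proj θ) measurable_snd, hΓ2]
  · rw [integral_map (f := fun z : ℝ × ℝ => (z.1 - z.2) ^ 2) hT.aemeasurable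
      ((measurable_fst.sub measurable_snd).pow_const 2).aestronglyMeasurable]

lemma exists_lift_kernel (θ : E) (μ : Measure E) [IsProbabilityMeasure μ] :
    ∃ κ : Kernel ℝ (EuclideanSpace ℝ (Fin d)), IsMarkovKernel κ ∧
      ((μ.map (fun x => ⟪θ, x⟫)) ⊗ₘ κ) = μ.map (fun x => ((⟪θ, x⟫ : ℝ), x)) ∧
      (∀ᵐ s ∂(μ.map (fun x => ⟪θ, x⟫)), κ s {x : E | ⟪θ, x⟫ ≠ s} = 0) := by
  have hg : Measurable fun x : E => ((⟪θ, x⟫ : ℝ), x) := (measurable_proj θ).prodMk measurable_id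
  set μ' : Measure (ℝ × E) := μ.map (fun x => ((⟪θ, x⟫ : ℝ), x)) with hμ'def
  haveI : IsProbabilityMeasure μ' := Measure.isProbabilityMeasure_map hg.aemeasurable
  have hfst : μ'.fst = μ.map (fun x => ⟪θ, x⟫) := by
    rw [Measure.fst, hμ'def, Measure.map_map measurable_fst hg]
    rfl
  refine ⟨μ'.condKernel, inferInstance, ?_, ?_⟩
  · rw [← hfst, μ'.disintegrate μ'.condKernel]
  · have hGmeas : MeasurableSet {q : ℝ × E | ⟪θ, q.2⟫ = q.1} :=
      measurableSet_eq_fun ((measurable_proj θ).comp measurable_snd) measurable_fst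
    have hnull : μ' {q : ℝ × E | ⟪θ, q.2⟫ = q.1}ᶜ = 0 := by
      rw [hμ'def, Measure.map_apply hg hGmeas.compl,
        show ((fun x : E => ((⟪θ, x⟫ : ℝ), x)) ⁻¹' {q : ℝ × E | ⟪θ, q.2⟫ = q.1}ᶜ) = (∅ : Set E)
          from by ext x; simp]
      exact measure_empty
    rw [← μ'.disintegrate μ'.condKernel, Measure.compProd_apply hGmeas.compl] at hnull
    rw [← hfst]
    have hmeas : Measurable fun s => μ'.condKernel s (Prod.mk s ⁻¹' {q : ℝ × E | ⟪θ, q.2⟫ = q.1}ᶜ) :=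
      Kernel.measurable_kernel_prodMk_left hGmeas.compl
    have h0 := (lintegral_eq_zero_iff hmeas).mp hnull
    filter_upwards [h0] with s hs
    have hset : (Prod.mk s ⁻¹' {q : ℝ × E | ⟪θ, q.2⟫ = q.1}ᶜ) = {x : E | ⟪θ, x⟫ ≠ s} := by
      ext x; simp [Ne]
    rwa [hset] at hs


lemma S1_subset_S2 (θ : E) (μ ν : Measure E) [IsProbabilityMeasure μ] [IsProbabilityMeasure ν] :
    S1 (μ.map fun x => ⟪θ, x⟫) (ν.map fun x => ⟪θ, x⟫) ⊆ S2 θ μ ν := by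
  rintro v ⟨γ, hγp, hγ1, hγ2, rfl⟩
  obtain ⟨κ, hκM, hκd, hκae⟩ := exists_lift_kernel θ μ
  obtain ⟨η, hηM, hηd, hηae⟩ := exists_lift_kernel θ ν
  set K : Kernel (ℝ × ℝ) (EuclideanSpace ℝ (Fin d) × EuclideanSpace ℝ (Fin d)) :=
    (κ.comap Prod.fst measurable_fst) ×ₖ (η.comap Prod.snd measurable_snd) with hK
  haveI : IsMarkovKernel K := by
    rw [hK]
    infer_instance
  set Γ : Measure (EuclideanSpace ℝ (Fin d) × EuclideanSpace ℝ (Fin d)) :=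
    (γ ⊗ₘ K).map Prod.snd with hΓ
  haveI : IsProbabilityMeasure (γ ⊗ₘ K) := by infer_instance
  have hKapp : ∀ z : ℝ × ℝ, K z = (κ z.1).prod (η z.2) := by
    intro z
    rw [hK, Kernel.prod_apply, Kernel.comap_apply, Kernel.comap_apply]
  -- first marginal
  have hmarg1 : Γ.map Prod.fst = μ := by
    ext A hA
    rw [hΓ, Measure.map_map measurable_fst measurable_snd,
      Measure.map_apply (measurable_fst.comp measurable_snd) hA,
      Measure.compProd_apply ((measurable_fst.comp measurable_snd) hA)]
    have hz : ∀ z : ℝ × ℝ, K z (Prod.mk z ⁻¹' ((Prod.fst ∘ Prod.snd) ⁻¹' A)) = κ z.1 A := by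
      intro z
      have hpre : (Prod.mk z ⁻¹' ((Prod.fst ∘ Prod.snd) ⁻¹' A))
          = (A ×ˢ (Set.univ : Set (EuclideanSpace ℝ (Fin d)))) := by
        ext w; simp
      haveI : IsProbabilityMeasure (η z.2) := hηM.isProbabilityMeasure z.2
      rw [hpre, hKapp z, Measure.prod_prod, measure_univ, mul_one]
    simp_rw [hz]
    rw [← lintegral_map (κ.measurable_coe hA) measurable_fst, hγ1]
    have hcd := congrArg (fun m : Measure (ℝ × EuclideanSpace ℝ (Fin d)) =>
      m (Set.univ ×ˢ A)) hκd
    rw [Measure.compProd_apply_prod MeasurableSet.univ hA, Measure.restrict_univ] at hcd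
    rw [hcd, Measure.map_apply
      (by exact (measurable_proj θ).prodMk measurable_id :
        Measurable fun x : EuclideanSpace ℝ (Fin d) => ((⟪θ, x⟫ : ℝ), x))
      (MeasurableSet.univ.prod hA)]
    congr 1
    ext x; simp
  -- second marginal
  have hmarg2 : Γ.map Prod.snd = ν := by
    ext A hA
    rw [hΓ, Measure.map_map measurable_snd measurable_snd,
      Measure.map_apply (measurable_snd.comp measurable_snd) hA,
      Measure.compProd_apply ((measurable_snd.comp measurable_snd) hA)]
    have hz : ∀ z : ℝ × ℝ, K z (Prod.mk z ⁻¹' ((Prod.snd ∘ Prod.snd) ⁻¹' A)) = η z.2 A := by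
      intro z
      have hpre : (Prod.mk z ⁻¹' ((Prod.snd ∘ Prod.snd) ⁻¹' A))
          = ((Set.univ : Set (EuclideanSpace ℝ (Fin d))) ×ˢ A) := by
        ext w; simp
      haveI : IsProbabilityMeasure (κ z.1) := hκM.isProbabilityMeasure z.1
      rw [hpre, hKapp z, Measure.prod_prod, measure_univ, one_mul]
    simp_rw [hz]
    rw [← lintegral_map (η.measurable_coe hA) measurable_snd, hγ2]
    have hcd := congrArg (fun m : Measure (ℝ × EuclideanSpace ℝ (Fin d)) =>
      m (Set.univ ×ˢ A)) hηd
    rw [Measure.compProd_apply_prod MeasurableSet.univ hA, Measure.restrict_univ] at hcd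
    rw [hcd, Measure.map_apply
      (by exact (measurable_proj θ).prodMk measurable_id :
        Measurable fun x : EuclideanSpace ℝ (Fin d) => ((⟪θ, x⟫ : ℝ), x))
      (MeasurableSet.univ.prod hA)]
    congr 1
    ext x; simp
  -- cost
  have hF : Measurable fun w : EuclideanSpace ℝ (Fin d) × EuclideanSpace ℝ (Fin d) =>
      (⟪θ, w.1⟫ - ⟪θ, w.2⟫) ^ 2 :=
    (((measurable_proj θ).comp measurable_fst).sub
      ((measurable_proj θ).comp measurable_snd)).pow_const 2
  have hf : Measurable fun z : ℝ × ℝ => (z.1 - z.2) ^ 2 :=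
    (measurable_fst.sub measurable_snd).pow_const 2
  have hcost : ∫ z, (z.1 - z.2) ^ 2 ∂γ = ∫ z, (⟪θ, z.1⟫ - ⟪θ, z.2⟫) ^ 2 ∂Γ := by
    rw [integral_eq_lintegral_of_nonneg_ae (Filter.Eventually.of_forall fun z => sq_nonneg _)
        hf.aestronglyMeasurable,
      integral_eq_lintegral_of_nonneg_ae (Filter.Eventually.of_forall fun z => sq_nonneg _)
        hF.aestronglyMeasurable]
    congr 1
    rw [hΓ, lintegral_map
      (by exact ENNReal.measurable_ofReal.comp hF :
        Measurable fun w : EuclideanSpace ℝ (Fin d) × EuclideanSpace ℝ (Fin d) =>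
          ENNReal.ofReal ((⟪θ, w.1⟫ - ⟪θ, w.2⟫) ^ 2)) measurable_snd,
      Measure.lintegral_compProd
      (by exact (ENNReal.measurable_ofReal.comp hF).comp measurable_snd :
        Measurable fun p : (ℝ × ℝ) × (EuclideanSpace ℝ (Fin d) × EuclideanSpace ℝ (Fin d)) =>
          ENNReal.ofReal ((⟪θ, p.2.1⟫ - ⟪θ, p.2.2⟫) ^ 2))]
    refine lintegral_congr_ae ?_
    have hae1 : ∀ᵐ z : ℝ × ℝ ∂γ, κ z.1 {x : EuclideanSpace ℝ (Fin d) | ⟪θ, x⟫ ≠ z.1} = 0 := by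
      have h := hκae
      rw [← hγ1] at h
      exact ae_of_ae_map measurable_fst.aemeasurable h
    have hae2 : ∀ᵐ z : ℝ × ℝ ∂γ, η z.2 {y : EuclideanSpace ℝ (Fin d) | ⟪θ, y⟫ ≠ z.2} = 0 := by
      have h := hηae
      rw [← hγ2] at h
      exact ae_of_ae_map measurable_snd.aemeasurable h
    filter_upwards [hae1, hae2] with z h1 h2
    rw [hKapp z]
    haveI : IsProbabilityMeasure (κ z.1) := hκM.isProbabilityMeasure z.1
    haveI : IsProbabilityMeasure (η z.2) := hηM.isProbabilityMeasure z.2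
    have hb : ((κ z.1).prod (η z.2))
        (({x : EuclideanSpace ℝ (Fin d) | ⟪θ, x⟫ ≠ z.1} ×ˢ Set.univ)
          ∪ (Set.univ ×ˢ {y : EuclideanSpace ℝ (Fin d) | ⟪θ, y⟫ ≠ z.2})) = 0 := by
      apply measure_union_null
      · rw [Measure.prod_prod, h1, zero_mul]
      · rw [Measure.prod_prod, h2, mul_zero]
    have hfib : ∀ᵐ w : EuclideanSpace ℝ (Fin d) × EuclideanSpace ℝ (Fin d)
        ∂((κ z.1).prod (η z.2)),
        ENNReal.ofReal ((⟪θ, w.1⟫ - ⟪θ, w.2⟫) ^ 2) = ENNReal.ofReal ((z.1 - z.2) ^ 2) := by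
      rw [ae_iff]
      refine measure_mono_null ?_ hb
      intro w hw
      simp only [Set.mem_setOf_eq] at hw
      by_cases hx : ⟪θ, w.1⟫ = z.1
      · by_cases hy : ⟪θ, w.2⟫ = z.2
        · exact absurd (by rw [hx, hy]) hw
        · exact Set.mem_union_right _ ⟨Set.mem_univ _, hy⟩
      · exact Set.mem_union_left _ ⟨hx, Set.mem_univ _⟩
    rw [lintegral_congr_ae hfib, lintegral_const, measure_univ, mul_one]
  haveI hΓp : IsProbabilityMeasure Γ := Measure.isProbabilityMeasure_map measurable_snd.aemeasurable
  exact ⟨Γ, hΓp, hmarg1, hmarg2, hcost⟩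

lemma S1_eq_S2 (θ : E) (μ ν : Measure E) [IsProbabilityMeasure μ] [IsProbabilityMeasure ν] :
    S1 (μ.map fun x => ⟪θ, x⟫) (ν.map fun x => ⟪θ, x⟫) = S2 θ μ ν :=
  le_antisymm (S1_subset_S2 θ μ ν) (S2_subset_S1 θ μ ν)


lemma norm_le_one_add_sq (x : E) : ‖x‖ ≤ 1 + ‖x‖ ^ 2 := by
  nlinarith [sq_nonneg (‖x‖ - 1), norm_nonneg x]

lemma integrable_id_E {μ : Measure E} [IsProbabilityMeasure μ]
    (hμ : Integrable (fun x : E => ‖x‖ ^ 2) μ) : Integrable (fun x : E => x) μ := by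
  refine ((integrable_const (1:ℝ)).add hμ).mono' aestronglyMeasurable_id ?_
  filter_upwards with x
  exact norm_le_one_add_sq x

lemma integrable_proj_sq {μ : Measure E} [IsProbabilityMeasure μ]
    (hμ : Integrable (fun x : E => ‖x‖ ^ 2) μ) (θ : E) :
    Integrable (fun x : ℝ => x ^ 2) (μ.map fun x => ⟪θ, x⟫) := by
  rw [integrable_map_measure (by fun_prop : Measurable fun x : ℝ => x ^ 2).aestronglyMeasurable
    (measurable_proj θ).aemeasurable]
  refine (hμ.const_mul (‖θ‖ ^ 2)).mono'
    (((measurable_proj θ).pow_const 2).aestronglyMeasurable) ?_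
  filter_upwards with x
  have h1 : |(⟪θ, x⟫ : ℝ)| ≤ ‖θ‖ * ‖x‖ := abs_real_inner_le_norm θ x
  simp only [Function.comp_apply, Real.norm_eq_abs]
  rw [abs_of_nonneg (sq_nonneg _)]
  nlinarith [abs_nonneg ((⟪θ, x⟫ : ℝ)), sq_abs ((⟪θ, x⟫ : ℝ)), norm_nonneg θ, norm_nonneg x]

lemma mean_proj {μ : Measure E} [IsProbabilityMeasure μ]
    (hμ : Integrable (fun x : E => ‖x‖ ^ 2) μ) (θ : E) :
    ∫ s, s ∂(μ.map fun x => ⟪θ, x⟫) = ⟪θ, ∫ x, x ∂μ⟫ := by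
  rw [← integral_comp_marg (γ := μ) (g := fun x : E => ⟪θ, x⟫) (measurable_proj θ) rfl
    (f := fun s : ℝ => s) measurable_id]
  exact integral_inner (integrable_id_E hμ) θ

lemma map_proj_centered (θ : E) (μ : Measure E) (m : E) :
    (μ.map (fun x : E => x - m)).map (fun x => ⟪θ, x⟫)
      = (μ.map (fun x => ⟪θ, x⟫)).map (· - (⟪θ, m⟫ : ℝ)) := by
  rw [Measure.map_map (measurable_proj θ) (by fun_prop), Measure.map_map (by fun_prop)
    (measurable_proj θ)]
  congr 1
  funext x
  simp only [Function.comp_apply]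
  rw [inner_sub_right]

lemma integrable_norm_sq_centered {μ : Measure E} [IsProbabilityMeasure μ]
    (hμ : Integrable (fun x : E => ‖x‖ ^ 2) μ) (m : E) :
    Integrable (fun x : E => ‖x‖ ^ 2) (μ.map fun x => x - m) := by
  rw [integrable_map_measure (by fun_prop : Measurable fun x : E => ‖x‖ ^ 2).aestronglyMeasurable
    (by fun_prop : Measurable fun x : E => x - m).aemeasurable]
  have hb : Integrable (fun x : E => 2 * ‖x‖ ^ 2 + 2 * ‖m‖ ^ 2) μ :=
    (hμ.const_mul 2).add (integrable_const _)
  refine hb.mono' (by fun_prop :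
    Measurable fun x : E => ‖x - m‖ ^ 2).aestronglyMeasurable ?_
  filter_upwards with x
  have h1 : ‖x - m‖ ≤ ‖x‖ + ‖m‖ := norm_sub_le x m
  have h2 : ‖x - m‖ ^ 2 ≤ (‖x‖ + ‖m‖) ^ 2 :=
    pow_le_pow_left₀ (norm_nonneg _) h1 2
  simp only [Function.comp_apply, Real.norm_eq_abs]
  rw [abs_of_nonneg (sq_nonneg _)]
  nlinarith [sq_nonneg (‖x‖ - ‖m‖)]

/-- Pointwise translation identity for the projected Wasserstein cost. -/
lemma WpPow_proj_translation (θ : E) (μ ν : Measure E)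
    [IsProbabilityMeasure μ] [IsProbabilityMeasure ν]
    (hμ : Integrable (fun x : E => ‖x‖ ^ 2) μ) (hν : Integrable (fun x : E => ‖x‖ ^ 2) ν) :
    WpPow 2 (μ.map fun x => ⟪θ, x⟫) (ν.map fun x => ⟪θ, x⟫)
      = WpPow 2 ((μ.map fun x : E => x - ∫ y, y ∂μ).map fun x => ⟪θ, x⟫)
          ((ν.map fun x : E => x - ∫ y, y ∂ν).map fun x => ⟪θ, x⟫)
        + (⟪θ, (∫ y, y ∂μ) - ∫ y, y ∂ν⟫ : ℝ) ^ 2 := by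
  rw [map_proj_centered, map_proj_centered]
  haveI : IsProbabilityMeasure (μ.map fun x => ⟪θ, x⟫) :=
    Measure.isProbabilityMeasure_map (measurable_proj θ).aemeasurable
  haveI : IsProbabilityMeasure (ν.map fun x => ⟪θ, x⟫) :=
    Measure.isProbabilityMeasure_map (measurable_proj θ).aemeasurable
  have h := WpPow_translation (μ.map fun x => ⟪θ, x⟫) (ν.map fun x => ⟪θ, x⟫)
    (integrable_proj_sq hμ θ) (integrable_proj_sq hν θ)
  rw [mean_proj hμ θ, mean_proj hν θ] at h
  rw [h, inner_sub_right]


lemma S2_bddBelow (θ : E) (μ ν : Measure E) : BddBelow (S2 θ μ ν) := by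
  refine ⟨0, fun v hv => ?_⟩
  obtain ⟨Γ, _, _, _, rfl⟩ := hv
  exact integral_nonneg fun z => sq_nonneg _

lemma sInf_S2_nonneg (θ : E) (μ ν : Measure E) : 0 ≤ sInf (S2 θ μ ν) := by
  apply Real.sInf_nonneg
  rintro v ⟨Γ, _, _, _, rfl⟩
  exact integral_nonneg fun z => sq_nonneg _

lemma prod_mem_S2 (θ : E) (μ ν : Measure E) [IsProbabilityMeasure μ] [IsProbabilityMeasure ν] :
    (∫ z, ((⟪θ, z.1⟫ : ℝ) - ⟪θ, z.2⟫) ^ 2 ∂(μ.prod ν)) ∈ S2 θ μ ν :=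
  ⟨μ.prod ν, inferInstance, by simp [Measure.map_fst_prod], by simp [Measure.map_snd_prod], rfl⟩

lemma measurable_cost_integrand (θ : E) :
    Measurable fun z : EuclideanSpace ℝ (Fin d) × EuclideanSpace ℝ (Fin d) =>
      ((⟪θ, z.1⟫ : ℝ) - ⟪θ, z.2⟫) ^ 2 :=
  (((measurable_proj θ).comp measurable_fst).sub
    ((measurable_proj θ).comp measurable_snd)).pow_const 2

lemma cost_integrand_le {θ : E} (hθ : ‖θ‖ = 1)
    (z : EuclideanSpace ℝ (Fin d) × EuclideanSpace ℝ (Fin d)) :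
    ((⟪θ, z.1⟫ : ℝ) - ⟪θ, z.2⟫) ^ 2 ≤ 2 * ‖z.1‖ ^ 2 + 2 * ‖z.2‖ ^ 2 := by
  have h0 : ((⟪θ, z.1⟫ : ℝ) - ⟪θ, z.2⟫) = ⟪θ, z.1 - z.2⟫ := (inner_sub_right _ _ _).symm
  have h1 : |(⟪θ, z.1 - z.2⟫ : ℝ)| ≤ ‖z.1 - z.2‖ := by
    have := abs_real_inner_le_norm θ (z.1 - z.2)
    rwa [hθ, one_mul] at this
  have h2 : ‖z.1 - z.2‖ ≤ ‖z.1‖ + ‖z.2‖ := norm_sub_le _ _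
  rw [h0]
  nlinarith [abs_nonneg ((⟪θ, z.1 - z.2⟫ : ℝ)), sq_abs ((⟪θ, z.1 - z.2⟫ : ℝ)),
    norm_nonneg (z.1 - z.2), norm_nonneg z.1, norm_nonneg z.2, sq_nonneg (‖z.1‖ - ‖z.2‖)]

lemma integrable_bound_E {Γ : Measure (EuclideanSpace ℝ (Fin d) × EuclideanSpace ℝ (Fin d))}
    [IsProbabilityMeasure Γ] {μ ν : Measure E}
    (h1 : Γ.map Prod.fst = μ) (h2 : Γ.map Prod.snd = ν)
    (hμ : Integrable (fun x : E => ‖x‖ ^ 2) μ) (hν : Integrable (fun x : E => ‖x‖ ^ 2) ν) :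
    Integrable (fun z : EuclideanSpace ℝ (Fin d) × EuclideanSpace ℝ (Fin d) =>
      2 * ‖z.1‖ ^ 2 + 2 * ‖z.2‖ ^ 2) Γ :=
  ((integrable_comp_marg measurable_fst h1 (by fun_prop) hμ).const_mul 2).add
    ((integrable_comp_marg measurable_snd h2 (by fun_prop) hν).const_mul 2)

lemma sInf_S2_le (θ : E) (hθ : ‖θ‖ = 1) (μ ν : Measure E)
    [IsProbabilityMeasure μ] [IsProbabilityMeasure ν]
    (hμ : Integrable (fun x : E => ‖x‖ ^ 2) μ) (hν : Integrable (fun x : E => ‖x‖ ^ 2) ν) :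
    sInf (S2 θ μ ν) ≤ ∫ z, (2 * ‖z.1‖ ^ 2 + 2 * ‖z.2‖ ^ 2) ∂(μ.prod ν) := by
  refine le_trans (csInf_le (S2_bddBelow θ μ ν) (prod_mem_S2 θ μ ν)) ?_
  have hbi : Integrable (fun z : EuclideanSpace ℝ (Fin d) × EuclideanSpace ℝ (Fin d) =>
      2 * ‖z.1‖ ^ 2 + 2 * ‖z.2‖ ^ 2) (μ.prod ν) :=
    integrable_bound_E (by simp [Measure.map_fst_prod]) (by simp [Measure.map_snd_prod]) hμ hν
  have hci : Integrable (fun z : EuclideanSpace ℝ (Fin d) × EuclideanSpace ℝ (Fin d) =>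
      ((⟪θ, z.1⟫ : ℝ) - ⟪θ, z.2⟫) ^ 2) (μ.prod ν) := by
    refine hbi.mono' (measurable_cost_integrand θ).aestronglyMeasurable ?_
    filter_upwards with z
    rw [Real.norm_eq_abs, abs_of_nonneg (sq_nonneg _)]
    exact cost_integrand_le hθ z
  exact integral_mono hci hbi fun z => cost_integrand_le hθ z

lemma measurable_sInf_S2 (μ ν : Measure E) [IsProbabilityMeasure μ] [IsProbabilityMeasure ν]
    (hμ : Integrable (fun x : E => ‖x‖ ^ 2) μ) (hν : Integrable (fun x : E => ‖x‖ ^ 2) ν) :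
    Measurable fun θ : sphere (0 : EuclideanSpace ℝ (Fin d)) 1 =>
      sInf (S2 (θ : EuclideanSpace ℝ (Fin d)) μ ν) := by
  apply measurable_of_Iio
  intro a
  have hopen : IsOpen {θ : sphere (0 : EuclideanSpace ℝ (Fin d)) 1 |
      sInf (S2 (θ : EuclideanSpace ℝ (Fin d)) μ ν) < a} := by
    rw [isOpen_iff_forall_mem_open]
    rintro θ0 hθ0
    have hne : (S2 ((θ0 : EuclideanSpace ℝ (Fin d))) μ ν).Nonempty :=
      ⟨_, prod_mem_S2 _ μ ν⟩
    obtain ⟨v, hv, hva⟩ := exists_lt_of_csInf_lt hne hθ0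
    obtain ⟨Γ, hΓp, h1, h2, rfl⟩ := hv
    haveI := hΓp
    have hbnd : Integrable (fun z : EuclideanSpace ℝ (Fin d) × EuclideanSpace ℝ (Fin d) =>
        2 * ‖z.1‖ ^ 2 + 2 * ‖z.2‖ ^ 2) Γ := integrable_bound_E h1 h2 hμ hν
    have hcont : Continuous fun θ : sphere (0 : EuclideanSpace ℝ (Fin d)) 1 =>
        ∫ z, ((⟪(θ : EuclideanSpace ℝ (Fin d)), z.1⟫ : ℝ)
          - ⟪(θ : EuclideanSpace ℝ (Fin d)), z.2⟫) ^ 2 ∂Γ := by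
      refine continuous_of_dominated
        (fun θ => (measurable_cost_integrand _).aestronglyMeasurable) (fun θ => ?_) hbnd ?_
      · filter_upwards with z
        rw [Real.norm_eq_abs, abs_of_nonneg (sq_nonneg _)]
        exact cost_integrand_le (mem_sphere_zero_iff_norm.mp θ.2) z
      · filter_upwards with z
        have hc1 : Continuous fun θ : sphere (0 : EuclideanSpace ℝ (Fin d)) 1 =>
            (⟪(θ : EuclideanSpace ℝ (Fin d)), z.1⟫ : ℝ) :=
          Continuous.inner continuous_subtype_val continuous_const
        have hc2 : Continuous fun θ : sphere (0 : EuclideanSpace ℝ (Fin d)) 1 =>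
            (⟪(θ : EuclideanSpace ℝ (Fin d)), z.2⟫ : ℝ) :=
          Continuous.inner continuous_subtype_val continuous_const
        exact (hc1.sub hc2).pow 2
    refine ⟨_, ?_, (isOpen_Iio (a := a)).preimage hcont, by simpa using hva⟩
    intro θ hθ
    have hmem : (∫ z, ((⟪(θ : EuclideanSpace ℝ (Fin d)), z.1⟫ : ℝ)
        - ⟪(θ : EuclideanSpace ℝ (Fin d)), z.2⟫) ^ 2 ∂Γ)
        ∈ S2 (θ : EuclideanSpace ℝ (Fin d)) μ ν := ⟨Γ, hΓp, h1, h2, rfl⟩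
    exact lt_of_le_of_lt (csInf_le (S2_bddBelow _ μ ν) hmem) hθ
  exact hopen.measurableSet

end Euclidean



section Sphere
open Set
variable {d : ℕ}
local notation "E" => EuclideanSpace ℝ (Fin d)

/-- The map induced on the unit sphere by a linear isometry equivalence. -/
def sphereMap (e : EuclideanSpace ℝ (Fin d) ≃ₗᵢ[ℝ] EuclideanSpace ℝ (Fin d))
    (θ : sphere (0 : EuclideanSpace ℝ (Fin d)) 1) : sphere (0 : EuclideanSpace ℝ (Fin d)) 1 :=
  ⟨e θ, by
    rw [mem_sphere_zero_iff_norm, e.norm_map]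
    exact mem_sphere_zero_iff_norm.mp θ.2⟩

lemma continuous_sphereMap (e : EuclideanSpace ℝ (Fin d) ≃ₗᵢ[ℝ] EuclideanSpace ℝ (Fin d)) :
    Continuous (sphereMap e) :=
  Continuous.subtype_mk (e.continuous.comp continuous_subtype_val) _

/-- The map induced on nonzero vectors by a linear isometry equivalence. -/
def nzMap (e : EuclideanSpace ℝ (Fin d) ≃ₗᵢ[ℝ] EuclideanSpace ℝ (Fin d))
    (y : ({0}ᶜ : Set (EuclideanSpace ℝ (Fin d)))) : ({0}ᶜ : Set (EuclideanSpace ℝ (Fin d))) :=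
  ⟨e y, by
    have hy : (y : EuclideanSpace ℝ (Fin d)) ≠ 0 := y.2
    simpa using (e.map_eq_zero_iff).not.mpr hy⟩

lemma comm_lemma (e : EuclideanSpace ℝ (Fin d) ≃ₗᵢ[ℝ] EuclideanSpace ℝ (Fin d))
    (y : ({0}ᶜ : Set (EuclideanSpace ℝ (Fin d)))) :
    homeomorphUnitSphereProd (EuclideanSpace ℝ (Fin d)) (nzMap e y)
      = (sphereMap e ((homeomorphUnitSphereProd (EuclideanSpace ℝ (Fin d)) y).1),
          (homeomorphUnitSphereProd (EuclideanSpace ℝ (Fin d)) y).2) := by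
  apply Prod.ext
  · apply Subtype.ext
    simp only [homeomorphUnitSphereProd_apply_fst_coe, sphereMap, nzMap]
    rw [e.norm_map, ← LinearIsometryEquiv.map_smul]
  · apply Subtype.ext
    simp only [homeomorphUnitSphereProd_apply_snd_coe, nzMap]
    exact e.norm_map y

lemma preimage_comm (e : EuclideanSpace ℝ (Fin d) ≃ₗᵢ[ℝ] EuclideanSpace ℝ (Fin d))
    (t : Set (sphere (0 : EuclideanSpace ℝ (Fin d)) 1)) (I : Set (Ioi (0:ℝ))) :
    homeomorphUnitSphereProd (EuclideanSpace ℝ (Fin d)) ⁻¹' ((sphereMap e ⁻¹' t) ×ˢ I)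
      = nzMap e ⁻¹' (homeomorphUnitSphereProd (EuclideanSpace ℝ (Fin d)) ⁻¹' (t ×ˢ I)) := by
  ext y
  simp only [Set.mem_preimage, Set.mem_prod, comm_lemma e y]

lemma image_nzMap_preimage (e : EuclideanSpace ℝ (Fin d) ≃ₗᵢ[ℝ] EuclideanSpace ℝ (Fin d))
    (S : Set ({0}ᶜ : Set (EuclideanSpace ℝ (Fin d)))) :
    Subtype.val '' (nzMap e ⁻¹' S) = ⇑e ⁻¹' (Subtype.val '' S) := by
  ext x
  simp only [Set.mem_image, Set.mem_preimage]
  constructor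
  · rintro ⟨y, hy, rfl⟩
    exact ⟨nzMap e y, hy, rfl⟩
  · rintro ⟨y, hy, hyx⟩
    have hx0 : x ≠ 0 := by
      intro h
      have h2 : (y : EuclideanSpace ℝ (Fin d)) ≠ 0 := y.2
      apply h2
      rw [hyx, h, map_zero]
    refine ⟨⟨x, hx0⟩, ?_, rfl⟩
    have : nzMap e ⟨x, hx0⟩ = y := Subtype.ext hyx.symm
    rw [this]
    exact hy

lemma toSphere_map (e : EuclideanSpace ℝ (Fin d) ≃ₗᵢ[ℝ] EuclideanSpace ℝ (Fin d)) :
    ((volume : Measure (EuclideanSpace ℝ (Fin d))).toSphere).map (sphereMap e)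
      = (volume : Measure (EuclideanSpace ℝ (Fin d))).toSphere := by
  ext s hs
  have hms : MeasurableSet (sphereMap e ⁻¹' s) := (continuous_sphereMap e).measurable hs
  rw [Measure.map_apply (continuous_sphereMap e).measurable hs,
    Measure.toSphere_apply' _ hms, Measure.toSphere_apply' _ hs]
  have h1 := (volume : Measure (EuclideanSpace ℝ (Fin d))).toSphere_apply_aux
    (sphereMap e ⁻¹' s) ⟨1, mem_Ioi.2 one_pos⟩
  have h2 := (volume : Measure (EuclideanSpace ℝ (Fin d))).toSphere_apply_aux
    s ⟨1, mem_Ioi.2 one_pos⟩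
  rw [show ((⟨1, mem_Ioi.2 one_pos⟩ : Ioi (0:ℝ)) : ℝ) = 1 from rfl] at h1 h2
  rw [← h1, ← h2, preimage_comm, image_nzMap_preimage]
  have hBmeas : MeasurableSet (Subtype.val ''
      (homeomorphUnitSphereProd (EuclideanSpace ℝ (Fin d)) ⁻¹'
        (s ×ˢ Iio (⟨1, mem_Ioi.2 one_pos⟩ : Ioi (0:ℝ))))) := by
    apply (MeasurableEmbedding.subtype_coe
      (measurableSet_singleton (0 : EuclideanSpace ℝ (Fin d))).compl).measurableSet_image.mpr
    exact (homeomorphUnitSphereProd (EuclideanSpace ℝ (Fin d))).continuous.measurable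
      (hs.prod measurableSet_Iio)
  congr 1
  exact e.measurePreserving.measure_preimage hBmeas.nullMeasurableSet


lemma sphereUniform_map (e : EuclideanSpace ℝ (Fin d) ≃ₗᵢ[ℝ] EuclideanSpace ℝ (Fin d)) :
    (sphereUniform d).map (sphereMap e) = sphereUniform d := by
  rw [sphereUniform, Measure.map_smul, toSphere_map]

lemma toSphere_univ_ne_zero (hd : 0 < d) :
    (volume : Measure (EuclideanSpace ℝ (Fin d))).toSphere Set.univ ≠ 0 := by
  rw [Measure.toSphere_apply_univ]
  refine mul_ne_zero ?_ (measure_ball_pos volume 0 one_pos).ne'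
  rw [finrank_euclideanSpace_fin]
  exact_mod_cast hd.ne'

lemma sphereUniform_isProb (hd : 0 < d) : IsProbabilityMeasure (sphereUniform d) :=
  ⟨by
    rw [sphereUniform, Measure.smul_apply, smul_eq_mul]
    exact ENNReal.inv_mul_cancel (toSphere_univ_ne_zero hd) (measure_ne_top _ _)⟩

lemma integral_sphereMap (e : EuclideanSpace ℝ (Fin d) ≃ₗᵢ[ℝ] EuclideanSpace ℝ (Fin d))
    (f : sphere (0 : EuclideanSpace ℝ (Fin d)) 1 → ℝ)
    (hm : AEStronglyMeasurable f (sphereUniform d)) :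
    ∫ θ, f (sphereMap e θ) ∂(sphereUniform d) = ∫ θ, f θ ∂(sphereUniform d) := by
  conv_rhs => rw [← sphereUniform_map e]
  rw [integral_map (continuous_sphereMap e).measurable.aemeasurable
    ((sphereUniform_map e).symm ▸ hm)]

lemma continuous_coord (i : Fin d) :
    Continuous fun θ : sphere (0 : EuclideanSpace ℝ (Fin d)) 1 =>
      (θ : EuclideanSpace ℝ (Fin d)) i :=
  (EuclideanSpace.proj (𝕜 := ℝ) i).continuous.comp continuous_subtype_val

lemma abs_coord_le (x : EuclideanSpace ℝ (Fin d)) (i : Fin d) : |x i| ≤ ‖x‖ := by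
  rw [EuclideanSpace.norm_eq]
  calc |x i| = Real.sqrt ((x i) ^ 2) := (Real.sqrt_sq_eq_abs _).symm
    _ ≤ Real.sqrt (∑ j, ‖x j‖ ^ 2) := by
        apply Real.sqrt_le_sqrt
        have : (x i) ^ 2 = ‖x i‖ ^ 2 := by rw [Real.norm_eq_abs, sq_abs]
        rw [this]
        exact Finset.single_le_sum (fun j _ => sq_nonneg ‖x j‖) (Finset.mem_univ i)

lemma sum_sq_coord (x : EuclideanSpace ℝ (Fin d)) : ∑ i, (x i) ^ 2 = ‖x‖ ^ 2 := by
  rw [EuclideanSpace.norm_eq, Real.sq_sqrt (Finset.sum_nonneg fun j _ => sq_nonneg ‖x j‖)]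
  exact Finset.sum_congr rfl fun j _ => by rw [Real.norm_eq_abs, sq_abs]

lemma integrable_coord_mul (hd : 0 < d) (i j : Fin d) :
    Integrable (fun θ : sphere (0 : EuclideanSpace ℝ (Fin d)) 1 =>
      (θ : EuclideanSpace ℝ (Fin d)) i * (θ : EuclideanSpace ℝ (Fin d)) j)
      (sphereUniform d) := by
  haveI := sphereUniform_isProb hd
  refine (integrable_const (1:ℝ)).mono'
    ((continuous_coord i).mul (continuous_coord j)).aestronglyMeasurable ?_
  filter_upwards with θ
  have hθ : ‖(θ : EuclideanSpace ℝ (Fin d))‖ = 1 := mem_sphere_zero_iff_norm.mp θ.2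
  have h1 := abs_coord_le (θ : EuclideanSpace ℝ (Fin d)) i
  have h2 := abs_coord_le (θ : EuclideanSpace ℝ (Fin d)) j
  rw [hθ] at h1 h2
  rw [Real.norm_eq_abs, abs_mul]
  calc |(θ : EuclideanSpace ℝ (Fin d)) i| * |(θ : EuclideanSpace ℝ (Fin d)) j| ≤ 1 * 1 :=
    mul_le_mul h1 h2 (abs_nonneg _) zero_le_one
    _ = 1 := one_mul 1

/-- Negation of the `j`-th coordinate, as a linear isometry equivalence. -/
def negCoord (j : Fin d) : EuclideanSpace ℝ (Fin d) ≃ₗᵢ[ℝ] EuclideanSpace ℝ (Fin d) :=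
  LinearEquiv.isometryOfInner
    { toFun := fun x => WithLp.toLp 2 (fun k => if k = j then -x k else x k)
      invFun := fun x => WithLp.toLp 2 (fun k => if k = j then -x k else x k)
      map_add' := fun x y => by
        ext k
        by_cases h : k = j <;> simp [h] <;> ring
      map_smul' := fun c x => by
        ext k
        by_cases h : k = j <;> simp [h]
      left_inv := fun x => by
        ext k
        by_cases h : k = j <;> simp [h]
      right_inv := fun x => by
        ext k
        by_cases h : k = j <;> simp [h] }
    (fun x y => by
      simp only [PiLp.inner_apply, RCLike.inner_apply, conj_trivial, LinearEquiv.coe_mk]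
      refine Finset.sum_congr rfl fun k _ => ?_
      by_cases h : k = j <;> simp [h])

lemma negCoord_apply (j : Fin d) (x : EuclideanSpace ℝ (Fin d)) (k : Fin d) :
    negCoord j x k = if k = j then -x k else x k := rfl

/-- Coordinate swap as a linear isometry equivalence. -/
def swapIso (i j : Fin d) : EuclideanSpace ℝ (Fin d) ≃ₗᵢ[ℝ] EuclideanSpace ℝ (Fin d) :=
  LinearIsometryEquiv.piLpCongrLeft 2 ℝ ℝ (Equiv.swap i j)

lemma swapIso_apply (i j : Fin d) (x : EuclideanSpace ℝ (Fin d)) (k : Fin d) :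
    swapIso i j x k = x (Equiv.swap i j k) := by
  rw [swapIso, LinearIsometryEquiv.piLpCongrLeft_apply]
  simp [Equiv.piCongrLeft'_apply]

lemma sphereMap_coe (e : EuclideanSpace ℝ (Fin d) ≃ₗᵢ[ℝ] EuclideanSpace ℝ (Fin d))
    (θ : sphere (0 : EuclideanSpace ℝ (Fin d)) 1) :
    ((sphereMap e θ : sphere (0 : EuclideanSpace ℝ (Fin d)) 1) : EuclideanSpace ℝ (Fin d))
      = e (θ : EuclideanSpace ℝ (Fin d)) := rfl

lemma A_offdiag (hd : 0 < d) {i j : Fin d} (hij : i ≠ j) :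
    ∫ θ : sphere (0 : EuclideanSpace ℝ (Fin d)) 1,
      (θ : EuclideanSpace ℝ (Fin d)) i * (θ : EuclideanSpace ℝ (Fin d)) j
      ∂(sphereUniform d) = 0 := by
  have h := integral_sphereMap (negCoord j)
    (fun θ : sphere (0 : EuclideanSpace ℝ (Fin d)) 1 =>
      (θ : EuclideanSpace ℝ (Fin d)) i * (θ : EuclideanSpace ℝ (Fin d)) j)
    ((continuous_coord i).mul (continuous_coord j)).aestronglyMeasurable
  have hptw : ∀ θ : sphere (0 : EuclideanSpace ℝ (Fin d)) 1,
      ((sphereMap (negCoord j) θ : sphere (0 : EuclideanSpace ℝ (Fin d)) 1) :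
        EuclideanSpace ℝ (Fin d)) i
      * ((sphereMap (negCoord j) θ : sphere (0 : EuclideanSpace ℝ (Fin d)) 1) :
        EuclideanSpace ℝ (Fin d)) j
      = -((θ : EuclideanSpace ℝ (Fin d)) i * (θ : EuclideanSpace ℝ (Fin d)) j) := by
    intro θ
    rw [sphereMap_coe, negCoord_apply, negCoord_apply]
    simp [hij]
  simp_rw [hptw] at h
  rw [integral_neg] at h
  linarith

lemma A_diag (hd : 0 < d) (i j : Fin d) :
    ∫ θ : sphere (0 : EuclideanSpace ℝ (Fin d)) 1,
      ((θ : EuclideanSpace ℝ (Fin d)) i) ^ 2 ∂(sphereUniform d)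
      = ∫ θ : sphere (0 : EuclideanSpace ℝ (Fin d)) 1,
        ((θ : EuclideanSpace ℝ (Fin d)) j) ^ 2 ∂(sphereUniform d) := by
  have h := integral_sphereMap (swapIso i j)
    (fun θ : sphere (0 : EuclideanSpace ℝ (Fin d)) 1 =>
      ((θ : EuclideanSpace ℝ (Fin d)) i) ^ 2)
    (((continuous_coord i).pow 2).aestronglyMeasurable)
  have hptw : ∀ θ : sphere (0 : EuclideanSpace ℝ (Fin d)) 1,
      (((sphereMap (swapIso i j) θ : sphere (0 : EuclideanSpace ℝ (Fin d)) 1) :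
        EuclideanSpace ℝ (Fin d)) i) ^ 2
      = ((θ : EuclideanSpace ℝ (Fin d)) j) ^ 2 := by
    intro θ
    rw [sphereMap_coe, swapIso_apply, Equiv.swap_apply_left]
  simp_rw [hptw] at h
  exact h.symm

lemma A_diag_val (hd : 0 < d) (i : Fin d) :
    ∫ θ : sphere (0 : EuclideanSpace ℝ (Fin d)) 1,
      ((θ : EuclideanSpace ℝ (Fin d)) i) ^ 2 ∂(sphereUniform d) = 1 / d := by
  haveI := sphereUniform_isProb hd
  have hsum : ∑ j : Fin d, ∫ θ : sphere (0 : EuclideanSpace ℝ (Fin d)) 1,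
      ((θ : EuclideanSpace ℝ (Fin d)) j) ^ 2 ∂(sphereUniform d) = 1 := by
    rw [← integral_finset_sum]
    · have : ∀ θ : sphere (0 : EuclideanSpace ℝ (Fin d)) 1,
          ∑ j : Fin d, ((θ : EuclideanSpace ℝ (Fin d)) j) ^ 2 = 1 := by
        intro θ
        rw [sum_sq_coord, mem_sphere_zero_iff_norm.mp θ.2, one_pow]
      simp_rw [this]
      simp
    · intro j _
      have := integrable_coord_mul hd j j
      simpa [sq] using this
  have hconst : ∀ j : Fin d, (∫ θ : sphere (0 : EuclideanSpace ℝ (Fin d)) 1,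
      ((θ : EuclideanSpace ℝ (Fin d)) j) ^ 2 ∂(sphereUniform d))
      = ∫ θ : sphere (0 : EuclideanSpace ℝ (Fin d)) 1,
        ((θ : EuclideanSpace ℝ (Fin d)) i) ^ 2 ∂(sphereUniform d) :=
    fun j => A_diag hd j i
  rw [Finset.sum_congr rfl (fun j _ => hconst j), Finset.sum_const, Finset.card_univ,
    Fintype.card_fin, nsmul_eq_mul] at hsum
  have hd' : (d : ℝ) ≠ 0 := by exact_mod_cast hd.ne'
  field_simp
  linarith [hsum]

lemma sphere_moment (hd : 0 < d) (m : EuclideanSpace ℝ (Fin d)) :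
    ∫ θ : sphere (0 : EuclideanSpace ℝ (Fin d)) 1,
      (⟪(θ : EuclideanSpace ℝ (Fin d)), m⟫ : ℝ) ^ 2 ∂(sphereUniform d)
      = ‖m‖ ^ 2 / d := by
  haveI := sphereUniform_isProb hd
  have hinner : ∀ θ : sphere (0 : EuclideanSpace ℝ (Fin d)) 1,
      (⟪(θ : EuclideanSpace ℝ (Fin d)), m⟫ : ℝ) ^ 2
      = ∑ i : Fin d, ∑ j : Fin d, (m i * m j) *
          ((θ : EuclideanSpace ℝ (Fin d)) i * (θ : EuclideanSpace ℝ (Fin d)) j) := by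
    intro θ
    have : (⟪(θ : EuclideanSpace ℝ (Fin d)), m⟫ : ℝ)
        = ∑ i : Fin d, (θ : EuclideanSpace ℝ (Fin d)) i * m i := by
      simp [PiLp.inner_apply, RCLike.inner_apply, conj_trivial, mul_comm]
    rw [this, sq, Finset.sum_mul_sum]
    refine Finset.sum_congr rfl fun i _ => Finset.sum_congr rfl fun j _ => by ring
  simp_rw [hinner]
  rw [integral_finset_sum _ (fun i _ => integrable_finset_sum _ (fun j _ =>
    (integrable_coord_mul hd i j).const_mul (m i * m j)))]
  have hij : ∀ i j : Fin d,
      ∫ θ : sphere (0 : EuclideanSpace ℝ (Fin d)) 1, (m i * m j) *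
        ((θ : EuclideanSpace ℝ (Fin d)) i * (θ : EuclideanSpace ℝ (Fin d)) j)
        ∂(sphereUniform d)
      = (m i * m j) * (if i = j then (1 / d : ℝ) else 0) := by
    intro i j
    rw [integral_const_mul]
    congr 1
    by_cases h : i = j
    · subst h
      simp only [if_pos rfl]
      have := A_diag_val hd i
      simpa [sq] using this
    · rw [if_neg h]
      exact A_offdiag hd h
  calc ∑ i : Fin d, ∫ θ : sphere (0 : EuclideanSpace ℝ (Fin d)) 1,
        ∑ j : Fin d, (m i * m j) *
          ((θ : EuclideanSpace ℝ (Fin d)) i * (θ : EuclideanSpace ℝ (Fin d)) j)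
          ∂(sphereUniform d)
      = ∑ i : Fin d, ∑ j : Fin d, (m i * m j) * (if i = j then (1 / d : ℝ) else 0) := by
        refine Finset.sum_congr rfl fun i _ => ?_
        rw [integral_finset_sum _ (fun j _ =>
          (integrable_coord_mul hd i j).const_mul (m i * m j))]
        exact Finset.sum_congr rfl fun j _ => hij i j
    _ = ∑ i : Fin d, (m i) ^ 2 * (1 / d : ℝ) := by
        refine Finset.sum_congr rfl fun i _ => ?_
        rw [Finset.sum_eq_single i]
        · simp [sq]
        · intro j _ hji
          simp [Ne.symm hji]
        · intro h
          exact absurd (Finset.mem_univ i) h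
    _ = (∑ i : Fin d, (m i) ^ 2) * (1 / d : ℝ) := by rw [← Finset.sum_mul]
    _ = ‖m‖ ^ 2 / d := by rw [sum_sq_coord]; ring


lemma integrable_sInf_S2 (hd : 0 < d) (μ ν : Measure E)
    [IsProbabilityMeasure μ] [IsProbabilityMeasure ν]
    (hμ : Integrable (fun x : E => ‖x‖ ^ 2) μ) (hν : Integrable (fun x : E => ‖x‖ ^ 2) ν) :
    Integrable (fun θ : sphere (0 : EuclideanSpace ℝ (Fin d)) 1 =>
      sInf (S2 (θ : EuclideanSpace ℝ (Fin d)) μ ν)) (sphereUniform d) := by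
  haveI := sphereUniform_isProb hd
  refine (integrable_const (∫ z, (2 * ‖z.1‖ ^ 2 + 2 * ‖z.2‖ ^ 2) ∂(μ.prod ν))).mono'
    (measurable_sInf_S2 μ ν hμ hν).aestronglyMeasurable ?_
  filter_upwards with θ
  rw [Real.norm_eq_abs, abs_of_nonneg (sInf_S2_nonneg _ _ _)]
  exact sInf_S2_le _ (mem_sphere_zero_iff_norm.mp θ.2) μ ν hμ hν

end Sphere
end SWaux
end

theorem sliced_wasserstein_translation {d : ℕ} (hd : 0 < d)
    (μ ν : Measure (EuclideanSpace ℝ (Fin d)))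
    [IsProbabilityMeasure μ] [IsProbabilityMeasure ν]
    (hμ : Integrable (fun x => ‖x‖ ^ 2) μ) (hν : Integrable (fun x => ‖x‖ ^ 2) ν) :
    SWPow 2 μ ν
      = SWPow 2 (μ.map fun x => x - ∫ y, y ∂μ) (ν.map fun x => x - ∫ y, y ∂ν)
        + (1 / d) * ‖(∫ y, y ∂μ) - ∫ y, y ∂ν‖ ^ 2 := by
  classical
  haveI hσ := SWaux.sphereUniform_isProb hd
  set m : EuclideanSpace ℝ (Fin d) := (∫ y, y ∂μ) - ∫ y, y ∂ν with hm
  set μc : Measure (EuclideanSpace ℝ (Fin d)) :=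
    μ.map (fun x : EuclideanSpace ℝ (Fin d) => x - ∫ y, y ∂μ) with hμc
  set νc : Measure (EuclideanSpace ℝ (Fin d)) :=
    ν.map (fun x : EuclideanSpace ℝ (Fin d) => x - ∫ y, y ∂ν) with hνc
  haveI : IsProbabilityMeasure μc := Measure.isProbabilityMeasure_map (by fun_prop)
  haveI : IsProbabilityMeasure νc := Measure.isProbabilityMeasure_map (by fun_prop)
  have hμc2 : Integrable (fun x : EuclideanSpace ℝ (Fin d) => ‖x‖ ^ 2) μc :=
    SWaux.integrable_norm_sq_centered hμ _
  have hνc2 : Integrable (fun x : EuclideanSpace ℝ (Fin d) => ‖x‖ ^ 2) νc :=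
    SWaux.integrable_norm_sq_centered hν _
  have hg : ∀ θ : sphere (0 : EuclideanSpace ℝ (Fin d)) 1,
      WpPow 2 (μc.map fun x => ⟪(θ : EuclideanSpace ℝ (Fin d)), x⟫)
        (νc.map fun x => ⟪(θ : EuclideanSpace ℝ (Fin d)), x⟫)
      = sInf (SWaux.S2 (θ : EuclideanSpace ℝ (Fin d)) μc νc) := fun θ => by
    rw [SWaux.WpPow_eq_sInf_S1, SWaux.S1_eq_S2]
  have hpt : ∀ θ : sphere (0 : EuclideanSpace ℝ (Fin d)) 1,
      WpPow 2 (μ.map fun x => ⟪(θ : EuclideanSpace ℝ (Fin d)), x⟫)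
        (ν.map fun x => ⟪(θ : EuclideanSpace ℝ (Fin d)), x⟫)
      = sInf (SWaux.S2 (θ : EuclideanSpace ℝ (Fin d)) μc νc)
        + (⟪(θ : EuclideanSpace ℝ (Fin d)), m⟫ : ℝ) ^ 2 := fun θ => by
    rw [← hg θ]
    exact SWaux.WpPow_proj_translation (θ : EuclideanSpace ℝ (Fin d)) μ ν hμ hν
  have hcint : Integrable (fun θ : sphere (0 : EuclideanSpace ℝ (Fin d)) 1 =>
      (⟪(θ : EuclideanSpace ℝ (Fin d)), m⟫ : ℝ) ^ 2) (sphereUniform d) := by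
    refine (integrable_const (‖m‖ ^ 2)).mono'
      ((Continuous.inner continuous_subtype_val continuous_const).pow 2).aestronglyMeasurable ?_
    filter_upwards with θ
    rw [Real.norm_eq_abs, abs_of_nonneg (sq_nonneg _)]
    have h1 : |(⟪(θ : EuclideanSpace ℝ (Fin d)), m⟫ : ℝ)| ≤ ‖(θ : EuclideanSpace ℝ (Fin d))‖ * ‖m‖ :=
      abs_real_inner_le_norm _ _
    rw [mem_sphere_zero_iff_norm.mp θ.2, one_mul] at h1
    nlinarith [abs_nonneg ((⟪(θ : EuclideanSpace ℝ (Fin d)), m⟫ : ℝ)),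
      sq_abs ((⟪(θ : EuclideanSpace ℝ (Fin d)), m⟫ : ℝ)), norm_nonneg m]
  rw [SWPow, SWPow]
  calc ∫ θ : sphere (0 : EuclideanSpace ℝ (Fin d)) 1,
        WpPow 2 (μ.map fun x => ⟪(θ : EuclideanSpace ℝ (Fin d)), x⟫)
          (ν.map fun x => ⟪(θ : EuclideanSpace ℝ (Fin d)), x⟫) ∂(sphereUniform d)
      = ∫ θ : sphere (0 : EuclideanSpace ℝ (Fin d)) 1,
          (sInf (SWaux.S2 (θ : EuclideanSpace ℝ (Fin d)) μc νc)
            + (⟪(θ : EuclideanSpace ℝ (Fin d)), m⟫ : ℝ) ^ 2) ∂(sphereUniform d) :=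
        integral_congr_ae (Filter.Eventually.of_forall hpt)
    _ = (∫ θ : sphere (0 : EuclideanSpace ℝ (Fin d)) 1,
          sInf (SWaux.S2 (θ : EuclideanSpace ℝ (Fin d)) μc νc) ∂(sphereUniform d))
        + ∫ θ : sphere (0 : EuclideanSpace ℝ (Fin d)) 1,
            (⟪(θ : EuclideanSpace ℝ (Fin d)), m⟫ : ℝ) ^ 2 ∂(sphereUniform d) :=
        integral_add (SWaux.integrable_sInf_S2 hd μc νc hμc2 hνc2) hcint
    _ = (∫ θ : sphere (0 : EuclideanSpace ℝ (Fin d)) 1,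
          WpPow 2 (μc.map fun x => ⟪(θ : EuclideanSpace ℝ (Fin d)), x⟫)
            (νc.map fun x => ⟪(θ : EuclideanSpace ℝ (Fin d)), x⟫) ∂(sphereUniform d))
        + (1 / d) * ‖m‖ ^ 2 := by
        rw [SWaux.sphere_moment hd m]
        congr 1
        · exact integral_congr_ae (Filter.Eventually.of_forall fun θ => (hg θ).symm)
        · ring
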